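/- arXiv:1109.1683 — 10 statements merged into one kernel-verified Lean document; each statement's English description precedes it below -/
import Mathlib

section
/- For every sequence of integers a_1, a_2, ..., a_n, ... and every positive integer n, the rational number n * Σ_{k=1}^{n} (1/k) * F^Δ(n,k) is an integer, where F^Δ(n,k) = Σ_{λ_1+...+λ_k=n, λ_i>0} a_{λ_1} a_{λ_2} ... a_{λ_k} is the sum, over all ordered compositions of n into exactly k positive parts, of the products of the corresponding terms of the sequence. -/
/-!
With `A(x) = Σ_{m ≥ 1} a_m x^m`, the compositae `F^Δ(n,k)` is the coefficient of `x^n` in `A^k`.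
Differentiating, `n [x^n] A^k = [x^(n-1)] (A^k)' = k [x^(n-1)] A^(k-1) A'`, so `k` divides
`n F^Δ(n,k)` and every summand `(n/k) F^Δ(n,k)` is already an integer.
-/

/-- The compositae `F^Δ(n,k)`: the sum over all ordered compositions of `n` into
exactly `k` positive parts of the products `a (λ 1) * ... * a (λ k)`. -/
def compositae (a : ℕ → ℤ) (n k : ℕ) : ℤ :=
  ∑ c ∈ (Finset.Nat.antidiagonalTuple k n).filter (fun c => ∀ i, 0 < c i),
    ∏ i, a (c i)

namespace PowerSeries

variable {R : Type*} [CommRing R]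

theorem coeff_pow_eq_sum_antidiagonalTuple (φ : R⟦X⟧) (k n : ℕ) :
    coeff n (φ ^ k) = ∑ c ∈ Finset.Nat.antidiagonalTuple k n, ∏ i, coeff (c i) φ := by
  classical
  rw [← Fin.prod_const, coeff_prod]
  refine Finset.sum_equiv Finsupp.equivFunOnFinite (fun f => ?_) (fun f _ => rfl)
  simp [Finset.Nat.mem_antidiagonalTuple]

theorem natCast_dvd_mul_coeff_pow (φ : R⟦X⟧) (k n : ℕ) :
    (k : R) ∣ n * coeff n (φ ^ k) := by
  cases n with
  | zero => simp
  | succ m =>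
    have h := coeff_derivative (φ ^ k) m
    rw [Derivation.leibniz_pow, map_nsmul, nsmul_eq_mul] at h
    exact ⟨_, by push_cast; rw [mul_comm, ← h]⟩

theorem coeff_X_mul_mk_succ (a : ℕ → R) (m : ℕ) :
    coeff m (X * mk fun j => a (j + 1)) = if m = 0 then 0 else a m := by
  cases m <;> simp [coeff_succ_X_mul]

end PowerSeries

open PowerSeries

theorem compositae_eq_coeff_pow (a : ℕ → ℤ) (n k : ℕ) :
    compositae a n k = coeff n ((X * mk fun j => a (j + 1)) ^ k) := by
  rw [coeff_pow_eq_sum_antidiagonalTuple, compositae, Finset.sum_filter]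
  refine Finset.sum_congr rfl fun c _ => ?_
  simp only [coeff_X_mul_mk_succ]
  split_ifs with hpos
  · exact Finset.prod_congr rfl fun i _ => (if_neg (hpos i).ne').symm
  · obtain ⟨i, hi⟩ := not_forall.mp hpos
    exact (Finset.prod_eq_zero (Finset.mem_univ i) (by simp [Nat.eq_zero_of_not_pos hi])).symm

theorem natCast_dvd_mul_compositae (a : ℕ → ℤ) (n k : ℕ) :
    (k : ℤ) ∣ n * compositae a n k := by
  rw [compositae_eq_coeff_pow]
  exact natCast_dvd_mul_coeff_pow _ k n

theorem stmt_0_general (a : ℕ → ℤ) (n : ℕ) :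
    ∃ z : ℤ, (n : ℚ) * ∑ k ∈ Finset.Icc 1 n, (1 / (k : ℚ)) * (compositae a n k : ℚ) = z := by
  refine ⟨∑ k ∈ Finset.Icc 1 n, n * compositae a n k / k, ?_⟩
  rw [Finset.mul_sum, Int.cast_sum]
  refine Finset.sum_congr rfl fun k hk => ?_
  have hk : (k : ℚ) ≠ 0 := Nat.cast_ne_zero.mpr (by grind)
  rw [Int.cast_div (natCast_dvd_mul_compositae a n k) (by exact_mod_cast hk)]
  push_cast
  field_simp

/-- For every integer sequence `a` and every positive integer `n`, the rational number
`n * Σ_{k=1}^{n} (1/k) * F^Δ(n,k)` is an integer. -/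
theorem stmt_0 (a : ℕ → ℤ) (n : ℕ) (hn : 0 < n) :
    ∃ z : ℤ, (n : ℚ) * ∑ k ∈ Finset.Icc 1 n, (1 / (k : ℚ)) * (compositae a n k : ℚ) = z :=
  stmt_0_general a n
end

section
/- For every sequence of integers a_1, a_2, ..., every positive integer n, and every k with 1 ≤ k ≤ n, the integer k divides n * F^Δ(n,k), where F^Δ(n,k) = Σ_{λ_1+...+λ_k=n, λ_i>0} a_{λ_1} a_{λ_2} ... a_{λ_k} is the sum, over all ordered compositions of n into exactly k positive parts, of the products of the corresponding terms of the sequence. -/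
/-- For every integer sequence `a`, every positive integer `n`, and every `k` with
`1 ≤ k ≤ n`, the integer `k` divides `n * F^Δ(n,k)`. -/
theorem stmt_1 (a : ℕ → ℤ) (n k : ℕ) (hn : 0 < n) (hk1 : 1 ≤ k) (hkn : k ≤ n) :
    (k : ℤ) ∣ (n : ℤ) * compositae a n k := by
  classical
  haveI : NeZero k := ⟨by omega⟩
  set T := (Finset.Nat.antidiagonalTuple k n).filter (fun c => ∀ i, 0 < c i) with hT
  have key : ∀ i : Fin k, (∑ c ∈ T, ((c i : ℤ) * ∏ j, a (c j)))
      = ∑ c ∈ T, ((c 0 : ℤ) * ∏ j, a (c j)) := by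
    intro i
    refine Finset.sum_nbij' (fun c => c ∘ (Equiv.swap 0 i))
      (fun c => c ∘ (Equiv.swap 0 i)) ?_ ?_ ?_ ?_ ?_
    · intro c hc
      rw [hT, Finset.mem_filter] at hc ⊢
      constructor
      · rw [Finset.Nat.mem_antidiagonalTuple] at hc ⊢
        rw [← hc.1]
        exact Equiv.sum_comp (Equiv.swap 0 i) c
      · intro j; exact hc.2 _
    · intro c hc
      rw [hT, Finset.mem_filter] at hc ⊢
      constructor
      · rw [Finset.Nat.mem_antidiagonalTuple] at hc ⊢
        rw [← hc.1]
        exact Equiv.sum_comp (Equiv.swap 0 i) c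
      · intro j; exact hc.2 _
    · intro c _
      funext j
      simp [Function.comp]
    · intro c _
      funext j
      simp [Function.comp]
    · intro c _
      simp only [Function.comp, Equiv.swap_apply_left]
      rw [Equiv.prod_comp (Equiv.swap 0 i) (fun j => a (c j))]
  have hmain : (n : ℤ) * compositae a n k
      = (k : ℤ) * ∑ c ∈ T, ((c 0 : ℤ) * ∏ j, a (c j)) := by
    rw [compositae, Finset.mul_sum, ← hT]
    have step : ∀ c ∈ T, (n : ℤ) * ∏ j, a (c j)
        = ∑ i : Fin k, ((c i : ℤ) * ∏ j, a (c j)) := by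
      intro c hc
      have h1 : ∑ j, c j = n :=
        Finset.Nat.mem_antidiagonalTuple.mp (Finset.mem_filter.mp hc).1
      rw [← Finset.sum_mul]
      congr 1
      exact_mod_cast h1.symm
    rw [Finset.sum_congr rfl step, Finset.sum_comm,
      Finset.sum_congr rfl (fun i _ => key i)]
    simp [Finset.sum_const, Finset.card_univ, mul_comm]
  exact ⟨_, hmain⟩
end

section
/- Let F(x) be a power series with integer coefficients f(1), f(2), ... and zero constant term, and let R(x) = Σ_{k≥1} (a(k)/k) x^k be a logarithmic generating function with integer a(k). Then for every positive integer n, the coefficient z(n) = Σ_{k=1}^{n} F^Δ(n,k) · (a(k)/k) of the superposition Z(x) = R(F(x)) satisfies: n · z(n) is an integer. Equivalently, for any two integer sequences f and a, the rational number Σ_{k=1}^{n} (n/k) · a(k) · F^Δ(n,k) is an integer, where F^Δ(n,k) = Σ_{λ_1+...+λ_k=n, λ_i>0} f(λ_1) f(λ_2) ... f(λ_k). -/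
lemma coord_sum_eq (f : ℕ → ℤ) (n k : ℕ) (i i' : Fin k) :
    ∑ c ∈ (Finset.Nat.antidiagonalTuple k n).filter (fun c => ∀ j, 0 < c j),
      (c i : ℤ) * ∏ j, f (c j)
    = ∑ c ∈ (Finset.Nat.antidiagonalTuple k n).filter (fun c => ∀ j, 0 < c j),
      (c i' : ℤ) * ∏ j, f (c j) := by
  apply Finset.sum_nbij' (i := fun c => c ∘ Equiv.swap i i')
    (j := fun c => c ∘ Equiv.swap i i')
  · intro c hc
    simp only [Finset.mem_filter, Finset.Nat.mem_antidiagonalTuple] at hc ⊢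
    refine ⟨?_, fun j => hc.2 _⟩
    rw [← hc.1]
    exact Fintype.sum_equiv (Equiv.swap i i') _ _ (fun j => rfl)
  · intro c hc
    simp only [Finset.mem_filter, Finset.Nat.mem_antidiagonalTuple] at hc ⊢
    refine ⟨?_, fun j => hc.2 _⟩
    rw [← hc.1]
    exact Fintype.sum_equiv (Equiv.swap i i') _ _ (fun j => rfl)
  · intro c _
    funext j
    simp [Function.comp, Equiv.swap_apply_self]
  · intro c _
    funext j
    simp [Function.comp, Equiv.swap_apply_self]
  · intro c _
    simp only [Function.comp]
    rw [Equiv.swap_apply_right]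
    congr 1
    exact (Fintype.prod_equiv (Equiv.swap i i') _ _ (fun j => rfl)).symm

lemma key (f : ℕ → ℤ) (n k : ℕ) (hk : 0 < k) :
    (k : ℤ) ∣ (n : ℤ) * compositae f n k := by
  set S := (Finset.Nat.antidiagonalTuple k n).filter (fun c => ∀ j, 0 < c j) with hS
  have i0 : Fin k := ⟨0, hk⟩
  have h1 : (n : ℤ) * compositae f n k
      = ∑ i : Fin k, ∑ c ∈ S, (c i : ℤ) * ∏ j, f (c j) := by
    rw [Finset.sum_comm, compositae, Finset.mul_sum]
    apply Finset.sum_congr rfl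
    intro c hc
    simp only [hS, Finset.mem_filter, Finset.Nat.mem_antidiagonalTuple] at hc
    rw [← Finset.sum_mul, ← Nat.cast_sum, hc.1]
  have h2 : ∀ i : Fin k, ∑ c ∈ S, (c i : ℤ) * ∏ j, f (c j)
      = ∑ c ∈ S, (c i0 : ℤ) * ∏ j, f (c j) := fun i => coord_sum_eq f n k i i0
  rw [h1, Finset.sum_congr rfl (fun i _ => h2 i), Finset.sum_const, Finset.card_univ,
    Fintype.card_fin, nsmul_eq_mul]
  exact Dvd.intro _ rfl

/-- For any two integer sequences `f` and `a` and every positive integer `n`, the rational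
number `Σ_{k=1}^{n} (n/k) · a(k) · F^Δ(n,k)` (that is, `n` times the `n`-th coefficient of the
superposition `R(F(x))` of the logarithmic generating function `R` on `F`) is an integer. -/
theorem stmt_2 (f a : ℕ → ℤ) (n : ℕ) (hn : 0 < n) :
    ∃ z : ℤ, ∑ k ∈ Finset.Icc 1 n,
      ((n : ℚ) / (k : ℚ)) * (a k : ℚ) * (compositae f n k : ℚ) = z := by
  refine ⟨∑ k ∈ Finset.Icc 1 n, a k * (((n : ℤ) * compositae f n k) / k), ?_⟩
  push_cast
  apply Finset.sum_congr rfl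
  intro k hk
  have hk1 : 0 < k := (Finset.mem_Icc.mp hk).1
  have hd := key f n k hk1
  have hk0 : (k : ℚ) ≠ 0 := by exact_mod_cast hk1.ne'
  have : ((((n : ℤ) * compositae f n k) / (k : ℤ) : ℤ) : ℚ)
      = ((n : ℚ) * compositae f n k) / k := by
    rw [Int.cast_div hd (by exact_mod_cast hk0)]
    push_cast; ring
  rw [this]
  field_simp
end

section
/- Let n be a prime number and let a_1, a_2, ... be any sequence of integers. Then the rational number Σ_{k=1}^{n-1} (1/k) * F^Δ(n,k) is an integer, where F^Δ(n,k) = Σ_{λ_1+...+λ_k=n, λ_i>0} a_{λ_1} a_{λ_2} ... a_{λ_k} is the sum, over all ordered compositions of n into exactly k positive parts, of the products of the corresponding terms of the sequence. -/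
open Finset AddAction

theorem AddAction.card_dvd_sum_of_stabilizer_eq_bot {G α R : Type*} [AddGroup G] [Finite G]
    [AddAction G α] [CommSemiring R] {s : Finset α} (hs : ∀ g : G, ∀ x ∈ s, g +ᵥ x ∈ s)
    (hfree : ∀ x ∈ s, stabilizer G x = ⊥) {f : α → R} (hf : ∀ (g : G) x, f (g +ᵥ x) = f x) :
    (Nat.card G : R) ∣ ∑ x ∈ s, f x := by
  classical
  have := Fintype.ofFinite G
  rw [sum_partition (orbitRel G α)]
  refine dvd_sum fun _ hω => ?_
  obtain ⟨x, hx, rfl⟩ := mem_image.mp hω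
  have hinj : Function.Injective (· +ᵥ x : G → α) := fun g h hgh => by
    have : -h + g ∈ stabilizer G x := by
      rw [mem_stabilizer_iff, ← vadd_vadd, show g +ᵥ x = h +ᵥ x from hgh, neg_vadd_vadd]
    rw [hfree x hx, AddSubgroup.mem_bot, neg_add_eq_zero] at this
    exact this.symm
  have horbit : s.filter (fun y => ⟦y⟧ = (⟦x⟧ : Quotient (orbitRel G α))) =
      univ.image (· +ᵥ x : G → α) := by
    ext y
    simp only [mem_filter, mem_image, mem_univ, true_and, Quotient.eq, orbitRel_apply,
      mem_orbit_iff]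
    constructor
    · rintro ⟨-, g, rfl⟩
      exact ⟨g, rfl⟩
    · rintro ⟨g, rfl⟩
      exact ⟨hs g x hx, g, rfl⟩
  rw [horbit, sum_image fun g _ h _ hgh => hinj hgh]
  simp [hf, Nat.card_eq_fintype_card]

namespace DomAddAct

instance {G : Type*} [Finite G] : Finite Gᵈᵃᵃ := Finite.of_equiv G mk

variable {G : Type*} [Fintype G]

theorem sum_vadd [AddGroup G] {M : Type*} [AddCommMonoid M] (g : Gᵈᵃᵃ) (c : G → M) :
    ∑ i, (g +ᵥ c) i = ∑ i, c i :=
  Fintype.sum_equiv (Equiv.addLeft (mk.symm g)) _ _ fun _ => rfl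

theorem prod_vadd [AddGroup G] {M : Type*} [CommMonoid M] (g : Gᵈᵃᵃ) (c : G → M) :
    ∏ i, (g +ᵥ c) i = ∏ i, c i :=
  Fintype.prod_equiv (Equiv.addLeft (mk.symm g)) _ _ fun _ => rfl

theorem card_stabilizer_dvd_sum [AddCommGroup G] {R : Type*} [CommSemiring R] (c : G → R) :
    (Nat.card (stabilizer Gᵈᵃᵃ c) : R) ∣ ∑ i, c i := by
  -- the stabilizer acts freely on `Gᵈᵃᵃ` by translation, and `c ∘ mk.symm` is invariant
  have hsum : ∑ x ∈ univ.map mk.toEmbedding, c (mk.symm x) = ∑ i, c i := by simp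
  rw [← hsum]
  refine card_dvd_sum_of_stabilizer_eq_bot (fun _ _ _ => by simp) (fun x _ => ?_) fun h x => ?_
  · refine (AddSubgroup.eq_bot_iff_forall _).2 fun g hg => ?_
    exact Subtype.ext (add_eq_right.mp (mem_stabilizer_iff.mp hg))
  · have := congrFun (mem_stabilizer_iff.mp h.2) (mk.symm x)
    rw [vadd_apply, vadd_eq_add] at this
    rwa [AddSubgroup.vadd_def, vadd_eq_add, symm_mk_add, add_comm]

theorem stabilizer_eq_bot_of_sum_eq_prime [AddCommGroup G] {n : ℕ} (hn : n.Prime)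
    (hG : Nat.card G < n) {c : G → ℕ} (hc : ∑ i, c i = n) : stabilizer Gᵈᵃᵃ c = ⊥ := by
  have hdvd_n : Nat.card (stabilizer Gᵈᵃᵃ c) ∣ n := hc ▸ card_stabilizer_dvd_sum c
  have hdvd_G : Nat.card (stabilizer Gᵈᵃᵃ c) ∣ Nat.card G := by
    simpa only [Nat.card_congr mk.symm] using
      AddSubgroup.card_addSubgroup_dvd_card (stabilizer Gᵈᵃᵃ c)
  have hle := Nat.le_of_dvd Nat.card_pos hdvd_G
  refine AddSubgroup.card_eq_one.mp ((hn.eq_one_or_self_of_dvd _ hdvd_n).resolve_right ?_)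
  omega

end DomAddAct

theorem dvd_compositae_of_lt_prime (a : ℕ → ℤ) {n k : ℕ} (hn : n.Prime) (hk : 0 < k)
    (hkn : k < n) : (k : ℤ) ∣ compositae a n k := by
  have : NeZero k := ⟨hk.ne'⟩
  have hcard : (k : ℤ) = Nat.card (Fin k)ᵈᵃᵃ := by simp [Nat.card_congr DomAddAct.mk.symm]
  rw [compositae, hcard]
  refine card_dvd_sum_of_stabilizer_eq_bot (fun g c hc => ?_) (fun c hc => ?_) fun g c => ?_
  · simp only [mem_filter, Nat.mem_antidiagonalTuple] at hc ⊢
    exact ⟨(DomAddAct.sum_vadd g c).trans hc.1, fun i => hc.2 _⟩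
  · simp only [mem_filter, Nat.mem_antidiagonalTuple] at hc
    exact DomAddAct.stabilizer_eq_bot_of_sum_eq_prime hn (by simpa using hkn) hc.1
  · exact DomAddAct.prod_vadd g (a ∘ c)

/-- If `n` is prime, then for any integer sequence `a` the rational number
`Σ_{k=1}^{n-1} (1/k) * F^Δ(n,k)` is an integer. -/
theorem stmt_3 (a : ℕ → ℤ) (n : ℕ) (hn : n.Prime) :
    ∃ z : ℤ, ∑ k ∈ Finset.Icc 1 (n - 1), (1 / (k : ℚ)) * (compositae a n k : ℚ) = z := by
  refine ⟨∑ k ∈ Icc 1 (n - 1), compositae a n k / k, ?_⟩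
  push_cast
  refine sum_congr rfl fun k hk => ?_
  obtain ⟨hk, hkn⟩ := mem_Icc.mp hk
  rw [Int.cast_div (dvd_compositae_of_lt_prime a hn hk (by omega)) (by positivity)]
  simp [div_eq_inv_mul]
end

section
/- Let n be a prime number, let a_1, a_2, ... be any sequence of integers, and let k be an integer with 1 ≤ k ≤ n - 1. Then k divides F^Δ(n,k), where F^Δ(n,k) = Σ_{λ_1+...+λ_k=n, λ_i>0} a_{λ_1} a_{λ_2} ... a_{λ_k} is the sum, over all ordered compositions of n into exactly k positive parts, of the products of the corresponding terms of the sequence. -/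
open Finset

def compositions (k n : ℕ) : Finset (Fin k → ℕ) :=
  (Nat.antidiagonalTuple k n).filter (fun c => ∀ i, 0 < c i)

variable {k n : ℕ}

theorem mem_compositions {c : Fin k → ℕ} :
    c ∈ compositions k n ↔ ∑ i, c i = n ∧ ∀ i, 0 < c i := by
  rw [compositions, mem_filter, Nat.mem_antidiagonalTuple]

theorem comp_perm_mem_compositions (σ : Equiv.Perm (Fin k)) {c : Fin k → ℕ} :
    c ∘ σ ∈ compositions k n ↔ c ∈ compositions k n := by
  simp only [mem_compositions, Function.comp_apply, Equiv.sum_comp σ c]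
  exact and_congr_right' (σ.forall_congr_right (q := fun i => 0 < c i))

theorem compositae_eq_sum_compositions (a : ℕ → ℤ) :
    compositae a n k = ∑ c ∈ compositions k n, ∏ i, a (c i) :=
  rfl

theorem sum_compositions_part_mul_prod_eq (a : ℕ → ℤ) (i j : Fin k) :
    ∑ c ∈ compositions k n, (c i : ℤ) * ∏ l, a (c l) =
      ∑ c ∈ compositions k n, (c j : ℤ) * ∏ l, a (c l) := by
  refine sum_nbij' (· ∘ Equiv.swap i j) (· ∘ Equiv.swap i j) ?_ ?_ ?_ ?_ ?_
  · intro c hc; exact (comp_perm_mem_compositions _).2 hc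
  · intro c hc; exact (comp_perm_mem_compositions _).2 hc
  · intro c _; ext l; simp
  · intro c _; ext l; simp
  · intro c _
    simp only [Function.comp_apply, Equiv.swap_apply_right]
    rw [Equiv.prod_comp (Equiv.swap i j) (fun l => a (c l))]

theorem natCast_mul_compositae (a : ℕ → ℤ) (hk : 0 < k) :
    (n : ℤ) * compositae a n k = k * ∑ c ∈ compositions k n, (c ⟨0, hk⟩ : ℤ) * ∏ l, a (c l) := by
  calc (n : ℤ) * compositae a n k
      = ∑ c ∈ compositions k n, (∑ i, (c i : ℤ)) * ∏ l, a (c l) := by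
        rw [compositae_eq_sum_compositions, mul_sum]
        refine sum_congr rfl fun c hc => ?_
        rw [← (mem_compositions.1 hc).1, Nat.cast_sum]
    _ = ∑ i : Fin k, ∑ c ∈ compositions k n, (c i : ℤ) * ∏ l, a (c l) := by
        simp only [sum_mul]
        exact sum_comm
    _ = _ := by
        simp only [sum_compositions_part_mul_prod_eq a _ ⟨0, hk⟩, sum_const, card_univ,
          Fintype.card_fin, nsmul_eq_mul]

/-- If `n` is prime and `1 ≤ k ≤ n - 1`, then for any integer sequence `a`,
`k` divides `F^Δ(n,k)`. -/
theorem stmt_4 (a : ℕ → ℤ) (n k : ℕ) (hn : n.Prime) (hk1 : 1 ≤ k) (hkn : k ≤ n - 1) :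
    (k : ℤ) ∣ compositae a n k := by
  have hcop : IsCoprime (k : ℤ) n := by
    rw [Nat.isCoprime_iff_coprime, Nat.coprime_comm, hn.coprime_iff_not_dvd]
    exact Nat.not_dvd_of_pos_of_lt hk1 (by omega)
  exact hcop.dvd_of_dvd_mul_left ⟨_, natCast_mul_compositae a hk1⟩
end

section
/- Let n be a prime number and let f and a be any two integer sequences. Then the rational number Σ_{k=1}^{n-1} (a(k)/k) · F^Δ(n,k) is an integer, where F^Δ(n,k) = Σ_{λ_1+...+λ_k=n, λ_i>0} f(λ_1) f(λ_2) ... f(λ_k) is the sum, over all ordered compositions of n into exactly k positive parts, of the products of the corresponding terms of f. -/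
open Finset

/-- By swapping coordinates, the coordinate-weighted sum is independent of the coordinate. -/
lemma compositae_coord_sum (f : ℕ → ℤ) (n k : ℕ) (hk : 0 < k) (j : Fin k) :
    ∑ c ∈ (Finset.Nat.antidiagonalTuple k n).filter (fun c => ∀ i, 0 < c i),
      (c j : ℤ) * ∏ i, f (c i)
    = ∑ c ∈ (Finset.Nat.antidiagonalTuple k n).filter (fun c => ∀ i, 0 < c i),
      (c ⟨0, hk⟩ : ℤ) * ∏ i, f (c i) := by
  set z : Fin k := ⟨0, hk⟩
  have hmem : ∀ c ∈ (Finset.Nat.antidiagonalTuple k n).filter (fun c => ∀ i, 0 < c i),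
      (c ∘ Equiv.swap z j) ∈
        (Finset.Nat.antidiagonalTuple k n).filter (fun c => ∀ i, 0 < c i) := by
    intro c hc
    rw [Finset.mem_filter, Finset.Nat.mem_antidiagonalTuple] at hc ⊢
    refine ⟨?_, fun i => hc.2 _⟩
    rw [← hc.1]
    exact Equiv.sum_comp (Equiv.swap z j) c
  refine Finset.sum_bij' (fun c _ => c ∘ Equiv.swap z j) (fun c _ => c ∘ Equiv.swap z j)
    hmem hmem ?_ ?_ ?_
  · intro c hc
    funext i
    simp [Function.comp, Equiv.swap_apply_self]
  · intro c hc
    funext i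
    simp [Function.comp, Equiv.swap_apply_self]
  · intro c hc
    have h1 : (c ∘ Equiv.swap z j) z = c j := by
      simp [Function.comp, Equiv.swap_apply_left]
    have h2 : ∏ i, f ((c ∘ Equiv.swap z j) i) = ∏ i, f (c i) :=
      Equiv.prod_comp (Equiv.swap z j) (fun i => f (c i))
    show (c j : ℤ) * ∏ i, f (c i)
      = ((c ∘ Equiv.swap z j) z : ℤ) * ∏ i, f ((c ∘ Equiv.swap z j) i)
    rw [h1, h2]

lemma dvd_compositae (f : ℕ → ℤ) (n k : ℕ) (hn : n.Prime) (hk : 0 < k) (hkn : k < n) :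
    (k : ℤ) ∣ compositae f n k := by
  have key : (n : ℤ) * compositae f n k
      = (k : ℤ) * ∑ c ∈ (Finset.Nat.antidiagonalTuple k n).filter (fun c => ∀ i, 0 < c i),
          (c ⟨0, hk⟩ : ℤ) * ∏ i, f (c i) := by
    rw [compositae, Finset.mul_sum]
    have step : ∀ c ∈ (Finset.Nat.antidiagonalTuple k n).filter (fun c => ∀ i, 0 < c i),
        (n : ℤ) * ∏ i, f (c i) = ∑ j : Fin k, (c j : ℤ) * ∏ i, f (c i) := by
      intro c hc
      rw [Finset.mem_filter, Finset.Nat.mem_antidiagonalTuple] at hc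
      rw [← Finset.sum_mul]
      congr 1
      rw [← hc.1]
      push_cast
      rfl
    rw [Finset.sum_congr rfl step, Finset.sum_comm]
    rw [Finset.sum_congr rfl (fun j _ => compositae_coord_sum f n k hk j)]
    rw [Finset.sum_const, Finset.card_univ, Fintype.card_fin, nsmul_eq_mul]
  have hdvd : (k : ℤ) ∣ (n : ℤ) * compositae f n k := ⟨_, key⟩
  have hc : Nat.Coprime n k :=
    hn.coprime_iff_not_dvd.mpr (fun h => absurd (Nat.le_of_dvd hk h) (not_le.mpr hkn))
  have hcop : IsCoprime (k : ℤ) (n : ℤ) := by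
    rw [Int.isCoprime_iff_gcd_eq_one, Int.gcd_natCast_natCast]
    exact hc.symm
  exact hcop.dvd_of_dvd_mul_left hdvd

/-- If `n` is prime, then for any two integer sequences `f` and `a` the rational number
`Σ_{k=1}^{n-1} (a(k)/k) · F^Δ(n,k)` is an integer. -/
theorem stmt_5 (f a : ℕ → ℤ) (n : ℕ) (hn : n.Prime) :
    ∃ z : ℤ, ∑ k ∈ Finset.Icc 1 (n - 1),
      ((a k : ℚ) / (k : ℚ)) * (compositae f n k : ℚ) = z := by
  refine ⟨∑ k ∈ Finset.Icc 1 (n - 1), a k * (compositae f n k / (k : ℤ)), ?_⟩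
  rw [Int.cast_sum]
  refine Finset.sum_congr rfl ?_
  intro k hk
  obtain ⟨hk1, hk2⟩ := Finset.mem_Icc.mp hk
  have hkn : k < n := lt_of_le_of_lt hk2 (Nat.sub_lt hn.pos one_pos)
  obtain ⟨m, hm⟩ := dvd_compositae f n k hn hk1 hkn
  have hk0 : (k : ℤ) ≠ 0 := by exact_mod_cast Nat.one_le_iff_ne_zero.mp hk1
  rw [hm, Int.mul_ediv_cancel_left _ hk0]
  have hkq : (k : ℚ) ≠ 0 := by exact_mod_cast Nat.one_le_iff_ne_zero.mp hk1
  push_cast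
  field_simp
end

section
/- Let n and k be positive integers with gcd(n, k) = 1, and let L be a multiset of k positive integers whose sum is n. Then k divides the multinomial coefficient k! / (j_1! · j_2! · ... · j_m!), where j_1, ..., j_m are the multiplicities of the distinct values occurring in L (so that j_1 + ... + j_m = k). Equivalently, k divides the number of ordered compositions of n into k parts whose multiset of parts equals L. -/
/-!
Splitting off a value `a` of multiplicity `j_a` gives `M = C(k, j_a) · M'` for the multinomial `M`,
and `j_a · C(k, j_a) = k · C(k - 1, j_a - 1)`, so `k ∣ j_a · M`. Weighting by `a` and summing,
`k ∣ (∑ a j_a) M = n M`, and `gcd(n, k) = 1` finishes.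
-/

open Finset

namespace Nat

theorem dvd_mul_choose (n k : ℕ) : n ∣ k * n.choose k := by
  rcases k with _ | k
  · simp
  rcases n with _ | n
  · simp
  exact ⟨n.choose k, by rw [mul_comm, ← add_one_mul_choose_eq]⟩

theorem sum_dvd_mul_multinomial {α : Type*} [DecidableEq α] {s : Finset α} {a : α} (ha : a ∈ s)
    (f : α → ℕ) : (∑ i ∈ s, f i) ∣ f a * multinomial s f := by
  rw [← insert_erase ha, multinomial_insert (notMem_erase a s), sum_insert (notMem_erase a s),
    ← mul_assoc]
  exact (dvd_mul_choose _ _).mul_right _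

theorem sum_dvd_sum_mul_mul_multinomial {α : Type*} [DecidableEq α] (s : Finset α)
    (f g : α → ℕ) : (∑ i ∈ s, f i) ∣ (∑ i ∈ s, f i * g i) * multinomial s f := by
  rw [sum_mul]
  refine dvd_sum fun a ha => ?_
  rw [mul_right_comm]
  exact (sum_dvd_mul_multinomial ha f).mul_right _

end Nat

theorem stmt_6_general (n k : ℕ) (hcop : Nat.gcd n k = 1)
    (L : Multiset ℕ) (hcard : Multiset.card L = k)
    (hsum : L.sum = n) :
    k ∣ Nat.multinomial L.toFinset L.count := by
  have hdvd : k ∣ n * Nat.multinomial L.toFinset L.count := by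
    have := Nat.sum_dvd_sum_mul_mul_multinomial L.toFinset L.count id
    simpa only [Multiset.toFinset_sum_count_eq, hcard, id, ← smul_eq_mul,
      ← Finset.sum_multiset_count, hsum] using this
  exact Nat.Coprime.dvd_of_dvd_mul_left (Nat.coprime_comm.mp hcop) hdvd

/-- If `gcd(n, k) = 1` and `L` is a multiset of `k` positive integers summing to `n`, then
`k` divides the multinomial coefficient `k! / (j_1! ⋯ j_m!)`, where the `j_i` are the
multiplicities of the distinct values of `L`. -/
theorem stmt_6 (n k : ℕ) (hn : 0 < n) (hk : 0 < k) (hcop : Nat.gcd n k = 1)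
    (L : Multiset ℕ) (hpos : ∀ x ∈ L, 0 < x) (hcard : Multiset.card L = k)
    (hsum : L.sum = n) :
    k ∣ Nat.multinomial L.toFinset L.count :=
  stmt_6_general n k hcop L hcard hsum
end

section
/- For every positive integer n, Σ_{k=1}^{n} (n/k) · C(k, n-k) = L_n, where C(k, n-k) is the binomial coefficient (zero when n - k > k) and L_n = Fib(n+1) + Fib(n-1) is the n-th Lucas number (Fib denoting the Fibonacci sequence with Fib(1) = Fib(2) = 1). -/
/-! Since `(n / k) · C(k, n - k) = C(k, n - k) + ((n - k) / k) · C(k, n - k)` and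
`((n - k) / k) · C(k, n - k) = C(k - 1, n - k - 1)`, the sum splits into two shallow diagonals
of Pascal's triangle, whose sums are `F (n + 1)` and `F (n - 1)`. -/

open Finset

namespace Nat

theorem fib_succ_eq_sum_range_choose (n : ℕ) :
    fib (n + 1) = ∑ k ∈ range (n + 1), k.choose (n - k) := by
  rw [fib_succ_eq_sum_choose, Nat.sum_antidiagonal_eq_sum_range_succ_mk]

theorem fib_succ_eq_sum_Icc_choose {n : ℕ} (hn : 0 < n) :
    fib (n + 1) = ∑ k ∈ Icc 1 n, k.choose (n - k) := by
  rw [fib_succ_eq_sum_range_choose, range_eq_Ico, sum_eq_sum_Ico_succ_bot (succ_pos n),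
    choose_eq_zero_of_lt (by omega), zero_add]
  rfl

theorem fib_eq_sum_Icc_choose_pred (n : ℕ) :
    fib n = ∑ k ∈ Icc 1 n, (k - 1).choose (n - k) := by
  obtain _ | m := n
  · rfl
  rw [fib_succ_eq_sum_range_choose, ← Ico_add_one_right_eq_Icc, sum_Ico_eq_sum_range]
  refine sum_congr rfl fun k _ => ?_
  congr 1 <;> omega

theorem sub_mul_choose_eq_mul_choose_pred {n k : ℕ} (hk : 0 < k) (hkn : k < n) :
    (n - k) * k.choose (n - k) = k * (k - 1).choose (n - 1 - k) := by
  have h := add_one_mul_choose_eq (k - 1) (n - 1 - k)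
  rw [Nat.sub_add_cancel hk, show n - 1 - k + 1 = n - k by omega] at h
  rw [h, Nat.mul_comm]

end Nat

theorem sum_Icc_sub_div_mul_choose (n : ℕ) :
    ∑ k ∈ Icc 1 n, ((n - k : ℕ) : ℚ) / k * k.choose (n - k) = Nat.fib (n - 1) := by
  obtain _ | m := n
  · rfl
  rw [sum_Icc_succ_top (Nat.le_add_left 1 m), Nat.sub_self, Nat.cast_zero, zero_div, zero_mul,
    add_zero, Nat.add_sub_cancel, Nat.fib_eq_sum_Icc_choose_pred, Nat.cast_sum]
  refine sum_congr rfl fun k hk => ?_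
  obtain ⟨hk1, hkm⟩ := mem_Icc.mp hk
  have hk0 : (k : ℚ) ≠ 0 := Nat.cast_ne_zero.mpr (by omega)
  rw [div_mul_eq_mul_div, div_eq_iff hk0, mul_comm _ (k : ℚ)]
  exact_mod_cast Nat.sub_mul_choose_eq_mul_choose_pred hk1 (Nat.lt_succ_of_le hkm)

/-- For every positive integer `n`, `Σ_{k=1}^{n} (n/k) · C(k, n-k) = L_n`, where
`L_n = Fib(n+1) + Fib(n-1)` is the `n`-th Lucas number. -/
theorem stmt_10 (n : ℕ) (hn : 0 < n) :
    ∑ k ∈ Finset.Icc 1 n, ((n : ℚ) / (k : ℚ)) * (k.choose (n - k) : ℚ)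
      = (Nat.fib (n + 1) : ℚ) + (Nat.fib (n - 1) : ℚ) := by
  have hsplit : ∀ k ∈ Icc 1 n, (n : ℚ) / k * k.choose (n - k)
      = k.choose (n - k) + ((n - k : ℕ) : ℚ) / k * k.choose (n - k) := by
    intro k hk
    obtain ⟨hk1, hkn⟩ := mem_Icc.mp hk
    have hk0 : (k : ℚ) ≠ 0 := Nat.cast_ne_zero.mpr (by omega)
    rw [Nat.cast_sub hkn]
    field_simp
    ring
  rw [sum_congr rfl hsplit, sum_add_distrib, sum_Icc_sub_div_mul_choose,
    Nat.fib_succ_eq_sum_Icc_choose hn, Nat.cast_sum]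
end

section
/- For every prime number p, p divides L_p - 1, where L_p = Fib(p+1) + Fib(p-1) is the p-th Lucas number (Fib denoting the Fibonacci sequence with Fib(1) = Fib(2) = 1). -/
open Matrix

lemma fib_matrix_pow (R : Type*) [CommRing R] (n : ℕ) :
    (!![1, 1; 1, 0] : Matrix (Fin 2) (Fin 2) R) ^ (n + 1) =
      !![(Nat.fib (n + 2) : R), (Nat.fib (n + 1) : R);
         (Nat.fib (n + 1) : R), (Nat.fib n : R)] := by
  induction n with
  | zero => simp [pow_succ]
  | succ k ih =>
    rw [pow_succ, ih]
    ext i j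
    fin_cases i <;> fin_cases j <;>
      simp [Matrix.mul_apply, Fin.sum_univ_succ, Nat.fib_add_two] <;> ring

/-- For every prime `p`, `p` divides `L_p - 1`, where `L_p = Fib(p+1) + Fib(p-1)`
is the `p`-th Lucas number. -/
theorem stmt_11 (p : ℕ) (hp : p.Prime) :
    (p : ℤ) ∣ ((Nat.fib (p + 1) : ℤ) + (Nat.fib (p - 1) : ℤ) - 1) := by
  haveI : Fact p.Prime := ⟨hp⟩
  obtain ⟨k, hk⟩ : ∃ k, p = k + 1 := ⟨p - 1, (Nat.succ_pred_eq_of_pos hp.pos).symm⟩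
  have htr := ZMod.trace_pow_card (!![1, 1; 1, 0] : Matrix (Fin 2) (Fin 2) (ZMod p))
  have hMp : (!![1, 1; 1, 0] : Matrix (Fin 2) (Fin 2) (ZMod p)) ^ p
      = (!![1, 1; 1, 0] : Matrix (Fin 2) (Fin 2) (ZMod p)) ^ (k + 1) := congrArg (fun n => (!![1, 1; 1, 0] : Matrix (Fin 2) (Fin 2) (ZMod p)) ^ n) hk
  rw [hMp, fib_matrix_pow] at htr
  have h1 : Matrix.trace (!![1, 1; 1, 0] : Matrix (Fin 2) (Fin 2) (ZMod p)) = 1 := by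
    simp [Matrix.trace, Fin.sum_univ_succ]
  rw [h1, one_pow] at htr
  have h2 : ((Nat.fib (p + 1) : ZMod p) + (Nat.fib (p - 1) : ZMod p)) = 1 := by
    have hk1 : p + 1 = k + 2 := by omega
    have hk2 : p - 1 = k := by omega
    rw [hk1, hk2]
    simpa [Matrix.trace, Fin.sum_univ_succ] using htr
  have h3 : (((Nat.fib (p + 1) : ℤ) + (Nat.fib (p - 1) : ℤ) - 1 : ℤ) : ZMod p) = 0 := by
    push_cast
    rw [h2]; ring
  exact (ZMod.intCast_zmod_eq_zero_iff_dvd _ p).mp h3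
end

section
/- For all positive integers n and k with 1 ≤ k ≤ n, n · Σ_{λ_1+...+λ_k=n, λ_i>0} Cat(λ_1 - 1) · Cat(λ_2 - 1) · ... · Cat(λ_k - 1) = k · C(2n-k-1, n-1), where the sum runs over all ordered compositions of n into exactly k positive parts and Cat(m) denotes the m-th Catalan number. That is, the compositae of the shifted Catalan generating function F(x) = Σ_{m≥1} Cat(m-1) x^m is F^Δ(n,k) = (k/n) C(2n-k-1, n-1). -/
/-!
The sum is the coefficient of `x ^ n` in `(x C(x)) ^ k`, where `C = 1 + x C²` is the Catalan
series, i.e. the coefficient of `x ^ m` in `C ^ k` with `m = n - k`. Multiplying `C = 1 + x C²` by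
`C ^ k` gives `C ^ (k + 1) = C ^ k + x C ^ (k + 2)`, a Pascal-type recurrence which is also satisfied
by the ballot numbers `C(2m + k, m) - C(2m + k, m + k + 1)`; so these are the coefficients of
`C ^ (k + 1)`, and multiplying by `m + k + 1` collapses the difference to `(k + 1) C(2m + k, m)`.
-/

open Finset PowerSeries

section Compositions

variable {R : Type*} [CommSemiring R]

theorem PowerSeries.coeff_prod_eq_sum_antidiagonalTuple (k n : ℕ) (f : Fin k → R⟦X⟧) :
    coeff n (∏ i, f i) = ∑ c ∈ Nat.antidiagonalTuple k n, ∏ i, coeff (c i) (f i) := by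
  rw [coeff_prod, finsuppAntidiag, sum_map, ← piAntidiag_univ_fin_eq_antidiagonalTuple,
    ← sum_attach (piAntidiag univ n)]
  rfl

theorem PowerSeries.coeff_X_mul_mk_pow (a : ℕ → R) (k n : ℕ) :
    coeff n ((X * mk a) ^ k) =
      ∑ c ∈ (Nat.antidiagonalTuple k n).filter (fun c => ∀ i, 0 < c i), ∏ i, a (c i - 1) := by
  have hcoeff (j : ℕ) : coeff j (X * mk a) = if j = 0 then 0 else a (j - 1) := by
    cases j <;> simp [coeff_succ_X_mul]
  rw [← Fin.prod_const, coeff_prod_eq_sum_antidiagonalTuple, sum_filter]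
  refine sum_congr rfl fun c _ => ?_
  split_ifs with hpos
  · exact prod_congr rfl fun i _ => by rw [hcoeff, if_neg (hpos i).ne']
  · obtain ⟨i, hi⟩ := not_forall.mp hpos
    exact prod_eq_zero (mem_univ i) (by rw [hcoeff, if_pos (Nat.eq_zero_of_not_pos hi)])

end Compositions

theorem Nat.succ_add_mul_choose_two_mul_add (m k : ℕ) :
    (m + k + 1) * (2 * m + k).choose (m + k + 1) = m * (2 * m + k).choose m := by
  cases m with
  | zero => simp
  | succ m =>
    have hsymm : (2 * (m + 1) + k).choose (m + 1 + k + 1) = (2 * (m + 1) + k).choose m := by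
      rw [← Nat.choose_symm (by omega)]
      congr 1
      omega
    have hsucc := Nat.choose_succ_right_eq (2 * (m + 1) + k) m
    rw [show 2 * (m + 1) + k - m = m + 1 + k + 1 by omega] at hsucc
    rw [hsymm, mul_comm, ← hsucc, mul_comm]

theorem catalan_add_choose_succ (n : ℕ) :
    catalan n + (2 * n).choose (n + 1) = (2 * n).choose n := by
  have hcat : (n + 1) * catalan n = (2 * n).choose n := succ_mul_catalan_eq_centralBinom n
  have hchoose : (2 * n).choose (n + 1) * (n + 1) = (2 * n).choose n * n := by
    rw [Nat.choose_succ_right_eq, show 2 * n - n = n by omega]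
  refine Nat.eq_of_mul_eq_mul_left n.succ_pos ?_
  linarith

namespace PowerSeries

theorem catalanSeries_pow_succ (k : ℕ) :
    catalanSeries ^ (k + 1) = catalanSeries ^ k + X * catalanSeries ^ (k + 2) := by
  calc catalanSeries ^ (k + 1) = catalanSeries ^ k * (catalanSeries ^ 2 * X + 1) := by
        rw [catalanSeries_sq_mul_X_add_one, pow_succ]
    _ = catalanSeries ^ k + X * catalanSeries ^ (k + 2) := by ring

theorem coeff_catalanSeries_pow_add_choose (m k : ℕ) :
    coeff m (catalanSeries ^ (k + 1)) + (2 * m + k).choose (m + k + 1) =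
      (2 * m + k).choose m := by
  induction m generalizing k with
  | zero => simp
  | succ m ihm =>
    induction k with
    | zero => simpa using catalan_add_choose_succ (m + 1)
    | succ k ihk =>
      have hprev := ihm (k + 2)
      have hpascal₁ := Nat.choose_succ_succ' (2 * m + k + 2) m
      have hpascal₂ := Nat.choose_succ_succ' (2 * m + k + 2) (m + k + 2)
      rw [catalanSeries_pow_succ, map_add, coeff_succ_X_mul]
      ring_nf at *
      omega

theorem mul_coeff_catalanSeries_pow (m k : ℕ) :
    (m + k + 1) * coeff m (catalanSeries ^ (k + 1)) = (k + 1) * (2 * m + k).choose m := by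
  have h := congrArg ((m + k + 1) * ·) (coeff_catalanSeries_pow_add_choose m k)
  simp only [mul_add] at h
  linarith [Nat.succ_add_mul_choose_two_mul_add m k]

end PowerSeries

theorem stmt_12_general (n k : ℕ) (hkn : k ≤ n) :
    n * ∑ c ∈ (Finset.Nat.antidiagonalTuple k n).filter (fun c => ∀ i, 0 < c i),
        ∏ i, catalan (c i - 1)
      = k * (2 * n - k - 1).choose (n - 1) := by
  rw [← coeff_X_mul_mk_pow, mul_pow, coeff_X_pow_mul', if_pos hkn]
  obtain ⟨m, rfl⟩ : ∃ m, n = m + k := ⟨n - k, by omega⟩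
  rcases k with _ | k
  · simp [coeff_one]
  · rw [show m + (k + 1) - (k + 1) = m by omega,
      show 2 * (m + (k + 1)) - (k + 1) - 1 = 2 * m + k by omega,
      show m + (k + 1) - 1 = m + k by omega,
      ← Nat.choose_symm_of_eq_add (by ring : 2 * m + k = m + (m + k))]
    exact mul_coeff_catalanSeries_pow m k

/-- For `1 ≤ k ≤ n`, the compositae of the shifted Catalan generating function satisfies
`n · Σ_{λ_1+⋯+λ_k=n, λ_i>0} Cat(λ_1 - 1) ⋯ Cat(λ_k - 1) = k · C(2n-k-1, n-1)`. -/
theorem stmt_12 (n k : ℕ) (hk1 : 1 ≤ k) (hkn : k ≤ n) :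
    n * ∑ c ∈ (Finset.Nat.antidiagonalTuple k n).filter (fun c => ∀ i, 0 < c i),
        ∏ i, catalan (c i - 1)
      = k * (2 * n - k - 1).choose (n - 1) :=
  stmt_12_general n k hkn
end
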